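/- arXiv:2203.02581 — 3 statements merged into one kernel-verified Lean document; each statement's English description precedes it below -/
import Mathlib

section
/- Let ℙ be a forcing notion and let λ be a regular cardinal with λ > 𝔥(ℙ). If ⟨A_ξ : ξ < λ⟩ is a base matrix for ℙ of height λ, then there is a maximal branch of the matrix which is not cofinal (i.e., a maximal branch of length strictly less than λ). -/
universe u

section ForcingDefs

variable {P : Type u} [Preorder P]

/-- Two conditions of a forcing notion are compatible if they have a common lower bound. -/
def Compat (p q : P) : Prop := ∃ r : P, r ≤ p ∧ r ≤ q

/-- A maximal antichain: a set of pairwise incompatible conditions such that every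
condition is compatible with some element of the set. -/
def MaxAntichain (A : Set P) : Prop :=
  (∀ p ∈ A, ∀ q ∈ A, p ≠ q → ¬ Compat p q) ∧ ∀ p : P, ∃ a ∈ A, Compat p a

/-- `B` refines `A` if every element of `B` lies below some element of `A`. -/
def Refines (B A : Set P) : Prop := ∀ b ∈ B, ∃ a ∈ A, b ≤ a

/-- `P` is `κ`-distributive: every family of `κ` many maximal antichains has a
common refinement. -/
def Distributive (P : Type u) [Preorder P] (κ : Cardinal.{u}) : Prop :=
  ∀ (ι : Type u) (A : ι → Set P), Cardinal.mk ι = κ →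
    (∀ i, MaxAntichain (A i)) →
    ∃ B : Set P, MaxAntichain B ∧ ∀ i, Refines B (A i)

/-- The distributivity number `𝔥(P)`: the least cardinal `κ` such that `P` is not
`κ`-distributive. -/
noncomputable def hdist (P : Type u) [Preorder P] : Cardinal.{u} :=
  sInf {κ : Cardinal.{u} | ¬ Distributive P κ}

/-- A distributivity matrix for `P` of height `lam` (an ordinal, typically `λ.ord`
for a cardinal `λ`): a refining sequence of maximal antichains without common
refinement. -/
def IsDistribMatrix (P : Type u) [Preorder P] (lam : Ordinal.{u})
    (A : Ordinal.{u} → Set P) : Prop :=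
  (∀ ξ, ξ < lam → MaxAntichain (A ξ)) ∧
  (∀ ξ η : Ordinal.{u}, ξ ≤ η → η < lam → Refines (A η) (A ξ)) ∧
  ¬ ∃ B : Set P, MaxAntichain B ∧ ∀ ξ, ξ < lam → Refines B (A ξ)

/-- A base matrix: a distributivity matrix whose union is dense. -/
def IsBaseMatrix (P : Type u) [Preorder P] (lam : Ordinal.{u})
    (A : Ordinal.{u} → Set P) : Prop :=
  IsDistribMatrix P lam A ∧ ∀ p : P, ∃ ξ, ξ < lam ∧ ∃ a ∈ A ξ, a ≤ p

/-- A branch of the matrix `A` of length `δ`: a decreasing sequence meeting each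
level below `δ`. -/
def IsBranch {P : Type u} [Preorder P] (A : Ordinal.{u} → Set P) (δ : Ordinal.{u})
    (f : Ordinal.{u} → P) : Prop :=
  (∀ ξ, ξ < δ → f ξ ∈ A ξ) ∧
  ∀ ξ η : Ordinal.{u}, ξ ≤ η → η < δ → f η ≤ f ξ

/-- A maximal branch of a matrix of height `lam`: a branch which no branch of the
matrix strictly extends. -/
def IsMaximalBranch {P : Type u} [Preorder P] (A : Ordinal.{u} → Set P)
    (lam δ : Ordinal.{u}) (f : Ordinal.{u} → P) : Prop :=
  δ ≤ lam ∧ IsBranch A δ f ∧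
  ¬ ∃ (δ' : Ordinal.{u}) (g : Ordinal.{u} → P),
      δ < δ' ∧ δ' ≤ lam ∧ IsBranch A δ' g ∧ ∀ ξ, ξ < δ → g ξ = f ξ

end ForcingDefs

/-
Suppose no maximal branch has length `< λ`. Then every branch of
length `< λ` has a lower bound in the next level, so every chain of fewer than `λ`
elements of the matrix has a lower bound in the matrix. Given fewer than `λ` maximal
antichains `Bᵢ`, a descending recursion along a well-order of the index set, using
density of the matrix, puts below any condition a condition lying below an element
of every `Bᵢ`. A maximal antichain inside this dense set refines all `Bᵢ`, so `P` is
`κ`-distributive for every `κ < λ`, contradicting `𝔥(P) < λ`: a distributivity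
matrix of height `λ` shows that `P` is not `λ`-distributive.
-/

open Cardinal Set

section Antichains

variable {P : Type u} [Preorder P]

theorem Compat.symm {p q : P} (h : Compat p q) : Compat q p :=
  let ⟨r, hp, hq⟩ := h
  ⟨r, hq, hp⟩

theorem MaxAntichain.eq_of_compat {A : Set P} (hA : MaxAntichain A) {a b : P}
    (ha : a ∈ A) (hb : b ∈ A) (hab : Compat a b) : a = b :=
  of_not_not fun hne => hA.1 a ha b hb hne hab

theorem exists_maxAntichain_subset_of_dense {D : Set P} (hD : ∀ p, ∃ d ≤ p, d ∈ D) :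
    ∃ E ⊆ D, MaxAntichain E := by
  let S : Set (Set P) := {E | E ⊆ D ∧ E.Pairwise fun a b => ¬ Compat a b}
  obtain ⟨E, ⟨hED, hE⟩, hmax⟩ := zorn_subset S fun ch hchS hch =>
    ⟨⋃₀ ch, ⟨sUnion_subset fun s hs => (hchS hs).1,
      (pairwise_sUnion hch.directedOn).2 fun s hs => (hchS hs).2⟩,
      fun _ => subset_sUnion_of_mem⟩
  refine ⟨E, hED, fun p hp q hq => hE hp hq, fun p => ?_⟩
  by_contra! hp
  obtain ⟨d, hdp, hdD⟩ := hD p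
  have hdE : ∀ e ∈ E, ¬ Compat d e := fun e he ⟨r, hrd, hre⟩ => hp e he ⟨r, hrd.trans hdp, hre⟩
  have hins : insert d E ∈ S :=
    ⟨insert_subset hdD hED, hE.insert fun e he _ => ⟨hdE e he, fun h => hdE e he h.symm⟩⟩
  exact hdE d (hmax hins (subset_insert d E) (mem_insert d E)) ⟨d, le_rfl, le_rfl⟩

theorem not_distributive_hdist {κ : Cardinal.{u}} (h : ¬ Distributive P κ) :
    ¬ Distributive P (hdist P) :=
  csInf_mem (s := {κ | ¬ Distributive P κ}) ⟨κ, h⟩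

theorem IsDistribMatrix.not_distributive {o : Ordinal.{u}} {A : Ordinal.{u} → Set P}
    (hA : IsDistribMatrix P o A) : ¬ Distributive P o.card := by
  intro hD
  obtain ⟨B, hB, hBA⟩ := hD o.ToType (fun i => A (Ordinal.ToType.mk.symm i)) (mk_toType o)
    fun i => hA.1 _ (Ordinal.ToType.mk.symm i).2
  exact hA.2.2 ⟨B, hB, fun ξ hξ => by simpa using hBA (Ordinal.ToType.mk ⟨ξ, hξ⟩)⟩

end Antichains

section DescendingChoice

variable {ι P : Type*} [LinearOrder ι] [WellFoundedLT ι] [Preorder P] [Nonempty P]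
  (G : ι → P → Prop)

/-- At stage `i`, some `x` with `G i x` below all earlier choices, if there is one. -/
noncomputable def descendingChoice : ι → P :=
  WellFoundedLT.fix fun i prev => Classical.epsilon fun x => G i x ∧ ∀ j (h : j < i), x ≤ prev j h

theorem descendingChoice_eq (i : ι) :
    descendingChoice G i =
      Classical.epsilon fun x => G i x ∧ ∀ j < i, x ≤ descendingChoice G j :=
  WellFoundedLT.fix_eq _ _

theorem descendingChoice_spec
    (hstep : ∀ i, (∀ j < i, G j (descendingChoice G j)) →
      AntitoneOn (descendingChoice G) (Iio i) →
      ∃ x, G i x ∧ ∀ j < i, x ≤ descendingChoice G j) :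
    (∀ i, G i (descendingChoice G i)) ∧ Antitone (descendingChoice G) := by
  have key : ∀ i,
      G i (descendingChoice G i) ∧ ∀ j < i, descendingChoice G i ≤ descendingChoice G j := by
    intro i
    induction i using WellFoundedLT.induction with
    | _ i ih =>
      rw [descendingChoice_eq]
      refine Classical.epsilon_spec (hstep i (fun j hj => (ih j hj).1) fun a _ b hb hab => ?_)
      rcases hab.eq_or_lt with rfl | hlt
      exacts [le_rfl, (ih b hb).2 a hlt]
  refine ⟨fun i => (key i).1, fun a b hab => ?_⟩
  rcases hab.eq_or_lt with rfl | hlt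
  exacts [le_rfl, (key b).2 a hlt]

end DescendingChoice

section Matrix

variable {P : Type u} [Preorder P]

def BranchesExtend (A : Ordinal.{u} → Set P) (lo : Ordinal.{u}) : Prop :=
  ∀ δ < lo, ∀ f, IsBranch A δ f → ∃ c ∈ A δ, ∀ η < δ, c ≤ f η

variable {lo : Ordinal.{u}} {A : Ordinal.{u} → Set P}

theorem IsBranch.exists_lowerBound_of_not_isMaximalBranch {lam δ : Ordinal.{u}}
    {f : Ordinal.{u} → P} (hf : IsBranch A δ f) (hδ : δ ≤ lam)
    (h : ¬ IsMaximalBranch A lam δ f) : ∃ c ∈ A δ, ∀ η < δ, c ≤ f η := by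
  obtain ⟨δ', g, hδδ', -, hg, hgf⟩ := of_not_not fun hno => h ⟨hδ, hf, hno⟩
  exact ⟨g δ, hg.1 δ hδδ', fun η hη => hgf η hη ▸ hg.2 η δ hη.le hδδ'⟩

variable [Nonempty P]

/-- The level-`η` element of the branch is the unique element of `A η` above some
element of `C`. -/
theorem exists_isBranch_through_chain (hMA : ∀ ξ, ξ < lo → MaxAntichain (A ξ))
    (hRef : ∀ ξ η, ξ ≤ η → η < lo → Refines (A η) (A ξ)) {C : Set P}
    (hC : IsChain (· ≤ ·) C) {ζ : P → Ordinal.{u}} (hζ : ∀ c ∈ C, ζ c < lo ∧ c ∈ A (ζ c))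
    {δ : Ordinal.{u}} (hδ : ∀ η < δ, ∃ c ∈ C, η ≤ ζ c) :
    ∃ f, IsBranch A δ f ∧ ∀ c ∈ C, ζ c < δ → f (ζ c) = c := by
  let above η a := a ∈ A η ∧ ∃ c ∈ C, c ≤ a
  let f η := Classical.epsilon (above η)
  have huniq : ∀ η < lo, ∀ a a', above η a → above η a' → a = a' := by
    rintro η hη a a' ⟨ha, c, hc, hca⟩ ⟨ha', c', hc', hca'⟩
    refine (hMA η hη).eq_of_compat ha ha' ?_
    rcases hC.total hc hc' with h | h
    exacts [⟨c, hca, h.trans hca'⟩, ⟨c', h.trans hca, hca'⟩]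
  have hlo : ∀ η < δ, η < lo := fun η hη => by
    obtain ⟨c, hc, hηc⟩ := hδ η hη
    exact hηc.trans_lt (hζ c hc).1
  have hf : ∀ η < δ, above η (f η) := fun η hη => by
    obtain ⟨c, hc, hηc⟩ := hδ η hη
    obtain ⟨a, ha, hca⟩ := hRef η (ζ c) hηc (hζ c hc).1 c (hζ c hc).2
    exact Classical.epsilon_spec ⟨a, ha, c, hc, hca⟩
  refine ⟨f, ⟨fun η hη => (hf η hη).1, fun η' η hη'η hη => ?_⟩, fun c hc hcδ => ?_⟩
  · obtain ⟨hfη, c, hc, hcf⟩ := hf η hη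
    obtain ⟨a, ha, hfa⟩ := hRef η' η hη'η (hlo η hη) (f η) hfη
    have hη' := hη'η.trans_lt hη
    exact hfa.trans_eq (huniq η' (hlo η' hη') a _ ⟨ha, c, hc, hcf.trans hfa⟩ (hf η' hη'))
  · exact huniq _ (hζ c hc).1 _ c (hf (ζ c) hcδ) ⟨(hζ c hc).2, c, hc, le_rfl⟩

theorem exists_mem_lowerBounds_of_isChain (hMA : ∀ ξ, ξ < lo → MaxAntichain (A ξ))
    (hRef : ∀ ξ η, ξ ≤ η → η < lo → Refines (A η) (A ξ)) (hext : BranchesExtend A lo)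
    {C : Set P} (hC : IsChain (· ≤ ·) C) (hCA : ∀ c ∈ C, ∃ ξ, ξ < lo ∧ c ∈ A ξ)
    (hcard : #C < lo.cof) : ∃ ξ, ξ < lo ∧ ∃ d ∈ A ξ, d ∈ lowerBounds C := by
  choose! ζ hζ using hCA
  let δ := ⨆ c : C, ζ c + 1
  have hδ : δ < lo := Ordinal.iSup_add_one_lt_of_lt_cof hcard fun c => (hζ c c.2).1
  have hcov : ∀ η < δ, ∃ c ∈ C, η ≤ ζ c := fun η hη => by
    obtain ⟨⟨c, hc⟩, hηc⟩ := Ordinal.lt_iSup_iff.1 hη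
    exact ⟨c, hc, Order.lt_add_one_iff.1 hηc⟩
  have hmem : ∀ c ∈ C, ζ c < δ := fun c hc =>
    (Order.lt_add_one_iff.2 le_rfl).trans_le (Ordinal.le_iSup (fun c : C => ζ c + 1) ⟨c, hc⟩)
  obtain ⟨f, hf, hfC⟩ := exists_isBranch_through_chain hMA hRef hC hζ hcov
  obtain ⟨d, hd, hdf⟩ := hext δ hδ f hf
  exact ⟨δ, hδ, d, hd, fun c hc => hfC c hc (hmem c hc) ▸ hdf _ (hmem c hc)⟩

theorem exists_le_forall_exists_mem_le (hMA : ∀ ξ, ξ < lo → MaxAntichain (A ξ))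
    (hRef : ∀ ξ η, ξ ≤ η → η < lo → Refines (A η) (A ξ))
    (hdense : ∀ p : P, ∃ ξ, ξ < lo ∧ ∃ a ∈ A ξ, a ≤ p) (hext : BranchesExtend A lo)
    (hlo : ℵ₀ ≤ lo.cof) {ι : Type u} (B : ι → Set P) (hB : ∀ i, MaxAntichain (B i))
    (hι : #ι < lo.cof) (p : P) : ∃ d ≤ p, ∀ i, ∃ b ∈ B i, d ≤ b := by
  obtain ⟨ξ₀, hξ₀, c₀, hc₀, hc₀p⟩ := hdense p
  obtain ⟨_, _⟩ := exists_wellFoundedLT ι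
  let M := {x | ∃ ξ, ξ < lo ∧ x ∈ A ξ} ∩ Iic c₀
  -- `c₀` joins the chain so that the lower bound lies below `p` even when `S = ∅`.
  have hlb : ∀ S ⊆ M, IsChain (· ≤ ·) S → #S < lo.cof → ∃ d ∈ M, d ∈ lowerBounds S := by
    intro S hSM hS hcard
    obtain ⟨ξ, hξ, d, hd, hdS⟩ := exists_mem_lowerBounds_of_isChain hMA hRef hext
      (hS.insert fun x hx _ => Or.inr (hSM hx).2)
      (by rintro x (rfl | hx); exacts [⟨ξ₀, hξ₀, hc₀⟩, (hSM hx).1])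
      (mk_insert_le.trans_lt (add_one_lt_of_lt hlo hcard))
    exact ⟨d, ⟨⟨ξ, hξ, hd⟩, hdS (mem_insert _ _)⟩, fun x hx => hdS (mem_insert_of_mem _ hx)⟩
  let G i x := x ∈ M ∧ ∃ b ∈ B i, x ≤ b
  have hG : ∀ i, ∀ d ∈ M, ∃ x ≤ d, G i x := by
    intro i d hd
    obtain ⟨b, hb, x, hxd, hxb⟩ := (hB i).2 d
    obtain ⟨ξ, hξ, y, hy, hyx⟩ := hdense x
    exact ⟨y, hyx.trans hxd, ⟨⟨ξ, hξ, hy⟩, (hyx.trans hxd).trans hd.2⟩, b, hb, hyx.trans hxb⟩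
  obtain ⟨hcG, hc⟩ := descendingChoice_spec G fun i hGi hanti => by
    have hchain : IsChain (· ≤ ·) (descendingChoice G '' Iio i) := by
      rintro _ ⟨j, hj, rfl⟩ _ ⟨k, hk, rfl⟩ -
      rcases le_total j k with h | h
      exacts [Or.inr (hanti hj hk h), Or.inl (hanti hk hj h)]
    obtain ⟨d, hd, hdS⟩ := hlb _ (image_subset_iff.2 fun j hj => (hGi j hj).1) hchain
      (mk_image_le.trans_lt ((mk_set_le _).trans_lt hι))
    obtain ⟨x, hxd, hx⟩ := hG i d hd
    exact ⟨x, hx, fun j hj => hxd.trans (hdS (mem_image_of_mem _ hj))⟩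
  obtain ⟨d, hd, hdS⟩ := hlb (range (descendingChoice G)) (range_subset_iff.2 fun i => (hcG i).1)
    hc.isChain_range (mk_range_le.trans_lt hι)
  refine ⟨d, hd.2.trans hc₀p, fun i => ?_⟩
  obtain ⟨b, hb, hcb⟩ := (hcG i).2
  exact ⟨b, hb, (hdS (mem_range_self i)).trans hcb⟩

theorem distributive_of_branchesExtend (hMA : ∀ ξ, ξ < lo → MaxAntichain (A ξ))
    (hRef : ∀ ξ η, ξ ≤ η → η < lo → Refines (A η) (A ξ))
    (hdense : ∀ p : P, ∃ ξ, ξ < lo ∧ ∃ a ∈ A ξ, a ≤ p) (hext : BranchesExtend A lo)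
    (hlo : ℵ₀ ≤ lo.cof) {κ : Cardinal.{u}} (hκ : κ < lo.cof) : Distributive P κ := by
  intro ι B hι hB
  obtain ⟨E, hED, hE⟩ := exists_maxAntichain_subset_of_dense
    (exists_le_forall_exists_mem_le hMA hRef hdense hext hlo B hB (hι ▸ hκ))
  exact ⟨E, hE, fun i e he => hED he i⟩

end Matrix

/-- A base matrix for a forcing notion `P` of regular height
`λ > 𝔥(P)` has a maximal branch which is not cofinal. -/
theorem base_matrix_noncofinal_branch {P : Type u} [PartialOrder P] [Nonempty P]
    (lam : Cardinal.{u}) (hreg : lam.IsRegular) (hgt : hdist P < lam)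
    (A : Ordinal.{u} → Set P) (hbase : IsBaseMatrix P lam.ord A) :
    ∃ (δ : Ordinal.{u}) (f : Ordinal.{u} → P),
      δ < lam.ord ∧ IsMaximalBranch A lam.ord δ f := by
  obtain ⟨hmat, hdense⟩ := hbase
  by_contra! H
  have hext : BranchesExtend A lam.ord := fun δ hδ f hf =>
    hf.exists_lowerBound_of_not_isMaximalBranch hδ.le (H δ f hδ)
  have hcof : lam.ord.cof = lam := hreg.cof_ord
  refine not_distributive_hdist (card_ord lam ▸ hmat.not_distributive)
    (distributive_of_branchesExtend hmat.1 hmat.2.1 hdense hext ?_ ?_)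
  · rw [hcof]; exact hreg.aleph0_le
  · rwa [hcof]
end

section
/- Let ℙ be a forcing notion, λ a regular cardinal, and ⟨A_ξ : ξ < λ⟩ a distributivity matrix for ℙ of height λ all of whose maximal branches are cofinal. Then for every limit ordinal μ < λ, every ≤-decreasing sequence ⟨a_i : i < μ⟩ of elements of ⋃_{ξ<λ} A_ξ has a lower bound belonging to ⋃_{ξ<λ} A_ξ. -/
/-! Write `ℓ i` for a level of the matrix containing `a i`. Above the pairwise compatible
family `a` there is at most one element on each level, and by refinement at least one on every
level `ξ ≤ ℓ i`; so these elements form a branch through all the `a i`, of length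
`δ = sup (ℓ i + 1)`. Regularity of `λ` gives `δ < λ`, so the branch is not maximal, and the
value at `δ` of any proper extension is a lower bound of the `a i` in `A δ`. -/

universe u

open Ordinal Set

theorem MaxAntichain.eq_of_compat_s1 {P : Type u} [Preorder P] {S : Set P} (hS : MaxAntichain S)
    {c c' : P} (hc : c ∈ S) (hc' : c' ∈ S) (hcc' : Compat c c') : c = c' :=
  by_contra fun hne => hS.1 c hc c' hc' hne hcc'

theorem Cardinal.IsRegular.iSup_Iio_add_one_lt_ord {κ : Cardinal.{u}} (hκ : κ.IsRegular)
    {μ : Ordinal.{u}} (hμ : μ < κ.ord) {f : Iio μ → Ordinal.{u}} (hf : ∀ i, f i < κ.ord) :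
    ⨆ i, f i + 1 < κ.ord := by
  refine lift_iSup_add_one_lt_of_lt_cof ?_ hf
  rwa [← lift_cof, hκ.cof_ord, Cardinal.mk_Iio_ordinal, Cardinal.lift_lift, Cardinal.lift_lt,
    ← Cardinal.lt_ord]

section Branch

variable {P : Type u} [Preorder P] {A : Ordinal.{u} → Set P} {ι : Type*} {x : ι → P}

noncomputable def branchThrough [Nonempty P] (A : Ordinal.{u} → Set P) (x : ι → P)
    (ξ : Ordinal.{u}) : P :=
  Classical.epsilon fun c => c ∈ A ξ ∧ ∃ k, x k ≤ c

theorem branchThrough_spec [Nonempty P] {ξ : Ordinal.{u}} (h : ∃ c ∈ A ξ, ∃ k, x k ≤ c) :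
    branchThrough A x ξ ∈ A ξ ∧ ∃ k, x k ≤ branchThrough A x ξ :=
  Classical.epsilon_spec (p := fun c => c ∈ A ξ ∧ ∃ k, x k ≤ c) h

theorem branchThrough_eq [Nonempty P] (hx : ∀ k j, Compat (x k) (x j)) {ξ : Ordinal.{u}}
    (hA : MaxAntichain (A ξ)) {c : P} (hc : c ∈ A ξ) {k : ι} (hkc : x k ≤ c) :
    branchThrough A x ξ = c := by
  obtain ⟨hmem, j, hj⟩ := branchThrough_spec ⟨c, hc, k, hkc⟩
  obtain ⟨r, hrj, hrk⟩ := hx j k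
  exact hA.eq_of_compat_s1 hmem hc ⟨r, hrj.trans hj, hrk.trans hkc⟩

theorem isBranch_branchThrough [Nonempty P] {lam δ : Ordinal.{u}} {ℓ : ι → Ordinal.{u}}
    (hmax : ∀ ξ < lam, MaxAntichain (A ξ))
    (href : ∀ ξ η : Ordinal.{u}, ξ ≤ η → η < lam → Refines (A η) (A ξ))
    (hx : ∀ k j, Compat (x k) (x j)) (hxℓ : ∀ k, x k ∈ A (ℓ k)) (hℓ : ∀ k, ℓ k < lam)
    (hcover : ∀ ξ < δ, ∃ k, ξ ≤ ℓ k) :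
    IsBranch A δ (branchThrough A x) := by
  have hlevel :
      ∀ ξ < δ, branchThrough A x ξ ∈ A ξ ∧ ∃ k, x k ≤ branchThrough A x ξ ∧ ξ ≤ ℓ k := by
    intro ξ hξ
    obtain ⟨k, hξk⟩ := hcover ξ hξ
    obtain ⟨c, hc, hkc⟩ := href ξ (ℓ k) hξk (hℓ k) (x k) (hxℓ k)
    rw [branchThrough_eq hx (hmax ξ (hξk.trans_lt (hℓ k))) hc hkc]
    exact ⟨hc, k, hkc, hξk⟩
  refine ⟨fun ξ hξ => (hlevel ξ hξ).1, fun ξ η hξη hη => ?_⟩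
  obtain ⟨hmem, k, hk, hηk⟩ := hlevel η hη
  obtain ⟨c, hc, hc'⟩ := href ξ η hξη (hηk.trans_lt (hℓ k)) _ hmem
  rwa [branchThrough_eq hx (hmax ξ (hξη.trans_lt (hηk.trans_lt (hℓ k)))) hc (hk.trans hc')]

end Branch

theorem IsBranch.exists_lowerBound_of_lt {P : Type u} [Preorder P] {A : Ordinal.{u} → Set P}
    {lam δ : Ordinal.{u}} {f : Ordinal.{u} → P}
    (hcof : ∀ δ f, IsMaximalBranch A lam δ f → δ = lam) (hf : IsBranch A δ f) (hδ : δ < lam) :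
    ∃ b ∈ A δ, ∀ ξ < δ, b ≤ f ξ := by
  obtain ⟨δ', g, hδδ', -, ⟨hgA, hg⟩, hgf⟩ :=
    not_not.mp fun h => hδ.ne (hcof δ f ⟨hδ.le, hf, h⟩)
  exact ⟨g δ, hgA δ hδδ', fun ξ hξ => hgf ξ hξ ▸ hg ξ δ hξ.le hδδ'⟩

theorem lower_bound_in_matrix_general {P : Type u} [PartialOrder P] [Nonempty P]
    (lam : Cardinal.{u}) (hreg : lam.IsRegular)
    (A : Ordinal.{u} → Set P) (hmat : IsDistribMatrix P lam.ord A)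
    (hcof : ∀ (δ : Ordinal.{u}) (f : Ordinal.{u} → P),
      IsMaximalBranch A lam.ord δ f → δ = lam.ord)
    (μ : Ordinal.{u}) (hμlt : μ < lam.ord)
    (a : Ordinal.{u} → P)
    (hmem : ∀ i, i < μ → ∃ ξ, ξ < lam.ord ∧ a i ∈ A ξ)
    (hdec : ∀ i j : Ordinal.{u}, i ≤ j → j < μ → a j ≤ a i) :
    ∃ b : P, (∃ ξ, ξ < lam.ord ∧ b ∈ A ξ) ∧ ∀ i, i < μ → b ≤ a i := by
  obtain ⟨hmax, href, -⟩ := hmat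
  choose! ℓ hℓ haℓ using hmem
  let x : Iio μ → P := fun i => a i
  have hx : ∀ i j, Compat (x i) (x j) := by
    intro i j
    rcases le_total i j with h | h
    · exact ⟨a j, hdec i j h j.2, le_rfl⟩
    · exact ⟨a i, le_rfl, hdec j i h i.2⟩
  set δ := ⨆ i : Iio μ, ℓ i + 1
  have hδ : δ < lam.ord := hreg.iSup_Iio_add_one_lt_ord hμlt fun i => hℓ i i.2
  have hbranch : IsBranch A δ (branchThrough A x) :=
    isBranch_branchThrough hmax href hx (fun i => haℓ i i.2) (fun i => hℓ i i.2)
      fun ξ hξ => lt_iSup_add_one_iff.mp hξ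
  obtain ⟨b, hb, hbelow⟩ := hbranch.exists_lowerBound_of_lt hcof hδ
  refine ⟨b, ⟨δ, hδ, hb⟩, fun i hi => ?_⟩
  calc b ≤ branchThrough A x (ℓ i) := hbelow _ (lt_iSup_add_one (fun i : Iio μ => ℓ i) ⟨i, hi⟩)
    _ = a i := branchThrough_eq hx (hmax _ (hℓ i hi)) (haℓ i hi) (k := ⟨i, hi⟩) le_rfl

/-- If all maximal branches of a distributivity matrix of regular
height `λ` are cofinal, then every decreasing sequence of matrix elements of limit
length `μ < λ` has a lower bound in the matrix. -/
theorem lower_bound_in_matrix {P : Type u} [PartialOrder P] [Nonempty P]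
    (lam : Cardinal.{u}) (hreg : lam.IsRegular)
    (A : Ordinal.{u} → Set P) (hmat : IsDistribMatrix P lam.ord A)
    (hcof : ∀ (δ : Ordinal.{u}) (f : Ordinal.{u} → P),
      IsMaximalBranch A lam.ord δ f → δ = lam.ord)
    (μ : Ordinal.{u}) (hμlt : μ < lam.ord) (hμlim : Order.IsSuccLimit μ)
    (a : Ordinal.{u} → P)
    (hmem : ∀ i, i < μ → ∃ ξ, ξ < lam.ord ∧ a i ∈ A ξ)
    (hdec : ∀ i j : Ordinal.{u}, i ≤ j → j < μ → a j ≤ a i) :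
    ∃ b : P, (∃ ξ, ξ < lam.ord ∧ b ∈ A ξ) ∧ ∀ i, i < μ → b ≤ a i :=
  lower_bound_in_matrix_general lam hreg A hmat hcof μ hμlt a hmem hdec
end

section
/- Suppose that every strictly ⊆*-decreasing sequence of infinite subsets of ω of length strictly less than 𝔥 has an infinite pseudo-intersection (i.e., there are no towers of length < 𝔥; this holds iff 𝔱 = 𝔥). Then every maximal branch of every distributivity matrix for ℙ_ω of height 𝔥 is cofinal. -/
universe u

/-- The forcing `ℙ_ω`: infinite subsets of `ω` ordered by almost-inclusion `⊆*`. -/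
def Pinf : Type := {a : Set ℕ // a.Infinite}

/-- `b ≤ a` iff `b ⊆* a`, i.e. `b \ a` is finite. -/
instance : Preorder Pinf where
  le b a := (b.1 \ a.1).Finite
  le_refl a := by simp
  le_trans a b c hab hbc := by
    refine Set.Finite.subset (hab.union hbc) ?_
    intro x hx
    by_cases hxb : x ∈ b.1
    · exact Or.inr ⟨hxb, hx.2⟩
    · exact Or.inl ⟨hx.1, hxb⟩

instance : Nonempty Pinf := ⟨⟨Set.univ, Set.infinite_univ⟩⟩


/-! Along a maximal branch `f` of length `δ < 𝔥`, the levels where `f` drops strictly below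
all earlier values, enumerated increasingly, form a strictly decreasing sequence of length
at most `δ`, which by hypothesis has a lower bound
`b`; `b` also bounds the whole branch. Some `a` in the maximal antichain at level `δ` is
compatible with `b`; since the antichains at earlier levels are refined by level `δ` and
consist of pairwise incompatible conditions, `a` lies below every `f ξ`, so appending `a`
extends the branch. -/

namespace Ordinal

theorem exists_strictMono_image_Iio_eq {S : Set Ordinal.{u}} {δ : Ordinal.{u}}
    (hS : S ⊆ Set.Iio δ) :
    ∃ δ' ≤ δ, ∃ e : Ordinal.{u} → Ordinal.{u}, StrictMono e ∧ e '' Set.Iio δ' = S := by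
  have hT : ¬ BddAbove (S ∪ Set.Ici δ) := fun h =>
    not_bddAbove_Ici δ (h.mono Set.subset_union_right)
  set e := enumOrd (S ∪ Set.Ici δ)
  have he : StrictMono e := enumOrd_strictMono hT
  obtain ⟨δ', hδ'⟩ : ∃ δ', e δ' = δ :=
    enumOrd_surjective hT (Set.mem_union_right S (Set.mem_Ici.2 le_rfl))
  refine ⟨δ', hδ' ▸ le_enumOrd_self hT, e, he, Set.ext fun ξ => ⟨?_, fun hξ => ?_⟩⟩
  · rintro ⟨ι, hι, rfl⟩
    have hlt : e ι < δ := hδ' ▸ he hι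
    exact (enumOrd_mem hT ι).resolve_right hlt.not_ge
  · obtain ⟨ι, rfl⟩ := enumOrd_surjective hT (Or.inl hξ)
    exact ⟨ι, he.lt_iff_lt.1 (hδ' ▸ hS hξ), rfl⟩

end Ordinal

section DecreasingSequences

variable {P : Type*} [Preorder P]

def dropStages (f : Ordinal.{u} → P) (δ : Ordinal.{u}) : Set Ordinal.{u} :=
  {ξ | ξ < δ ∧ ∀ η < ξ, ¬ f η ≤ f ξ}

theorem exists_mem_dropStages_le (f : Ordinal.{u} → P) {δ ξ : Ordinal.{u}} (hξ : ξ < δ) :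
    ∃ ζ ∈ dropStages f δ, f ζ ≤ f ξ := by
  obtain ⟨ζ, hζ, hmin⟩ := wellFounded_lt.has_min {η | η ≤ ξ ∧ f η ≤ f ξ} ⟨ξ, le_rfl, le_rfl⟩
  refine ⟨ζ, ⟨hζ.1.trans_lt hξ, fun η hη hle => hmin η ⟨hη.le.trans hζ.1, hle.trans hζ.2⟩ hη⟩,
    hζ.2⟩

theorem dropStages_strictAnti {f : Ordinal.{u} → P} {δ ξ η : Ordinal.{u}}
    (hf : ∀ ξ η, ξ ≤ η → η < δ → f η ≤ f ξ) (hη : η ∈ dropStages f δ) (hξη : ξ < η) :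
    f η < f ξ :=
  lt_of_le_not_ge (hf ξ η hξη.le hη.1) (hη.2 ξ hξη)

theorem exists_lowerBound_of_antitone {lam δ : Ordinal.{u}}
    (htow : ∀ (δ : Ordinal.{u}) (f : Ordinal.{u} → P), δ < lam →
      (∀ i j : Ordinal.{u}, i < j → j < δ → f j < f i) → ∃ b : P, ∀ i, i < δ → b ≤ f i)
    (hδ : δ < lam) {f : Ordinal.{u} → P} (hf : ∀ ξ η, ξ ≤ η → η < δ → f η ≤ f ξ) :
    ∃ b : P, ∀ ξ, ξ < δ → b ≤ f ξ := by
  obtain ⟨δ', hδ'δ, e, he, himage⟩ :=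
    Ordinal.exists_strictMono_image_Iio_eq (fun _ h => h.1 : dropStages f δ ⊆ Set.Iio δ)
  have hdrop : ∀ ι < δ', e ι ∈ dropStages f δ := fun ι hι => himage ▸ ⟨ι, hι, rfl⟩
  obtain ⟨b, hb⟩ := htow δ' (f ∘ e) (hδ'δ.trans_lt hδ) fun i j hij hj =>
    dropStages_strictAnti (f := f) hf (hdrop j hj) (he hij)
  refine ⟨b, fun ξ hξ => ?_⟩
  obtain ⟨ζ, hζ, hζξ⟩ := exists_mem_dropStages_le f hξ
  obtain ⟨ι, hι, rfl⟩ := himage ▸ hζ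
  exact (hb ι hι).trans hζξ

end DecreasingSequences

section Branches

variable {P : Type u} [Preorder P]

theorem Compat.mono {p q p' q' : P} (h : Compat p q) (hp : p ≤ p') (hq : q ≤ q') :
    Compat p' q' :=
  let ⟨r, hrp, hrq⟩ := h
  ⟨r, hrp.trans hp, hrq.trans hq⟩

theorem MaxAntichain.eq_of_compat_s11 {A : Set P} (hA : MaxAntichain A) {p q : P} (hp : p ∈ A)
    (hq : q ∈ A) (hpq : Compat p q) : p = q :=
  by_contra fun hne => hA.1 p hp q hq hne hpq

variable {A : Ordinal.{u} → Set P} {δ : Ordinal.{u}} {f : Ordinal.{u} → P}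

theorem IsBranch.exists_mem_forall_le (hf : IsBranch A δ f)
    (hmac : ∀ ξ ≤ δ, MaxAntichain (A ξ)) (hrefine : ∀ ξ < δ, Refines (A δ) (A ξ)) {b : P}
    (hb : ∀ ξ, ξ < δ → b ≤ f ξ) : ∃ a ∈ A δ, ∀ ξ, ξ < δ → a ≤ f ξ := by
  obtain ⟨a, haA, hba⟩ := (hmac δ le_rfl).2 b
  refine ⟨a, haA, fun ξ hξ => ?_⟩
  obtain ⟨a', ha'A, haa'⟩ := hrefine ξ hξ a haA
  have : f ξ = a' := (hmac ξ hξ.le).eq_of_compat_s11 (hf.1 ξ hξ) ha'A (hba.mono (hb ξ hξ) haa')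
  exact this ▸ haa'

theorem IsBranch.update (hf : IsBranch A δ f) {a : P} (haA : a ∈ A δ)
    (ha : ∀ ξ, ξ < δ → a ≤ f ξ) : IsBranch A (Order.succ δ) (Function.update f δ a) := by
  refine ⟨fun ξ hξ => ?_, fun ξ η hξη hη => ?_⟩
  · rcases (Order.lt_succ_iff.1 hξ).lt_or_eq with hξ | rfl
    · simpa only [Function.update_of_ne hξ.ne] using hf.1 ξ hξ
    · simpa only [Function.update_self] using haA
  · rcases (Order.lt_succ_iff.1 hη).lt_or_eq with hη | rfl
    · simpa only [Function.update_of_ne hη.ne, Function.update_of_ne (hξη.trans_lt hη).ne]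
        using hf.2 ξ η hξη hη
    · rcases hξη.lt_or_eq with hξ | rfl
      · simpa only [Function.update_self, Function.update_of_ne hξ.ne] using ha ξ hξ
      · exact le_rfl

theorem IsMaximalBranch.eq_of_forall_exists_lowerBound {lam : Ordinal.{u}}
    (htow : ∀ (δ : Ordinal.{u}) (f : Ordinal.{u} → P), δ < lam →
      (∀ i j : Ordinal.{u}, i < j → j < δ → f j < f i) → ∃ b : P, ∀ i, i < δ → b ≤ f i)
    (hmac : ∀ ξ, ξ < lam → MaxAntichain (A ξ))
    (hrefine : ∀ ξ η : Ordinal.{u}, ξ ≤ η → η < lam → Refines (A η) (A ξ))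
    (hf : IsMaximalBranch A lam δ f) : δ = lam := by
  obtain ⟨hδle, hbr, hnoext⟩ := hf
  refine hδle.eq_or_lt.resolve_right fun hδ => hnoext ?_
  obtain ⟨b, hb⟩ := exists_lowerBound_of_antitone htow hδ hbr.2
  obtain ⟨a, haA, ha⟩ := hbr.exists_mem_forall_le (fun ξ hξ => hmac ξ (hξ.trans_lt hδ))
    (fun ξ hξ => hrefine ξ δ hξ.le hδ) hb
  exact ⟨Order.succ δ, Function.update f δ a, Order.lt_succ δ, Order.succ_le_of_lt hδ,
    hbr.update haA ha, fun ξ hξ => Function.update_of_ne hξ.ne _ _⟩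

end Branches

/-- If every strictly `⊆*`-decreasing sequence of infinite subsets
of `ω` of length `< 𝔥` has an infinite pseudo-intersection (i.e. there are no
towers of length `< 𝔥`), then every maximal branch of every distributivity matrix
for `ℙ_ω` of height `𝔥` is cofinal. -/
theorem no_short_towers_all_maximal_branches_cofinal
    (htow : ∀ (δ : Ordinal.{0}) (f : Ordinal.{0} → Pinf), δ < (hdist Pinf).ord →
      (∀ i j : Ordinal.{0}, i < j → j < δ → f j < f i) →
      ∃ b : Pinf, ∀ i, i < δ → b ≤ f i) :
    ∀ (A : Ordinal.{0} → Set Pinf), IsDistribMatrix Pinf (hdist Pinf).ord A →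
      ∀ (δ : Ordinal.{0}) (f : Ordinal.{0} → Pinf),
        IsMaximalBranch A (hdist Pinf).ord δ f → δ = (hdist Pinf).ord :=
  fun _ hA _ _ hf => hf.eq_of_forall_exists_lowerBound htow hA.1 hA.2.1
end
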